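/- Let M be a loopless matroid of rank d on a finite ground set. Then the coefficient of t in the Kazhdan–Lusztig polynomial P_M(t) equals W_{0,d−1} − W_{0,1}, i.e., the number of flats of rank d−1 minus the number of flats of rank 1. -/

import Mathlib

open scoped Classical

/-- A matroid on a finite ground set, presented by its rank function
(normalized, monotone, submodular, with unit increase). -/
structure FinMatroid where
  E : Type
  fintypeE : Fintype E
  deceqE : DecidableEq E
  rk : Finset E → ℕ
  rk_empty : rk ∅ = 0
  rk_mono : ∀ ⦃S T : Finset E⦄, S ⊆ T → rk S ≤ rk T
  rk_submod : ∀ S T : Finset E, rk (S ∪ T) + rk (S ∩ T) ≤ rk S + rk T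
  rk_insert_le : ∀ (S : Finset E) (x : E), rk (insert x S) ≤ rk S + 1

attribute [instance] FinMatroid.fintypeE FinMatroid.deceqE

namespace FinMatroid

/-- The rank of the matroid: the rank of the full ground set. -/
noncomputable def rank (M : FinMatroid) : ℕ := M.rk Finset.univ

/-- A flat: a set such that adding any new element increases the rank. -/
def IsFlat (M : FinMatroid) (F : Finset M.E) : Prop :=
  ∀ x ∉ F, M.rk (insert x F) ≠ M.rk F

/-- The (finite) collection of flats of `M`. -/
noncomputable def flats (M : FinMatroid) : Finset (Finset M.E) :=
  Finset.univ.filter M.IsFlat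

/-- A matroid is loopless if every singleton has rank 1. -/
def Loopless (M : FinMatroid) : Prop := ∀ x : M.E, M.rk {x} = 1

/-- The Möbius function of the lattice of flats of `M` (extended by the usual
recursion; `mu A B = 0` unless `A ⊆ B`). -/
noncomputable def mu (M : FinMatroid) (A B : Finset M.E) : ℤ :=
  if A = B then 1
  else -∑ G ∈ (M.flats.filter (fun G => A ⊆ G ∧ G ⊂ B)).attach,
        M.mu A G.1
termination_by B.card
decreasing_by
  exact Finset.card_lt_card (Finset.mem_filter.mp G.2).2.2

/-- The characteristic polynomial `χ_M(t) = ∑_{F flat} μ(∅,F) t^(rk M - rk F)`. -/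
noncomputable def charPoly (M : FinMatroid) : Polynomial ℤ :=
  ∑ F ∈ M.flats, Polynomial.C (M.mu ∅ F) * Polynomial.X ^ (M.rank - M.rk F)

/-- The localization `M_F`: the restriction of `M` to the set `F`. -/
noncomputable def localization (M : FinMatroid) (F : Finset M.E) : FinMatroid where
  E := {x : M.E // x ∈ F}
  fintypeE := inferInstance
  deceqE := inferInstance
  rk S := M.rk (S.map (Function.Embedding.subtype _))
  rk_empty := by simpa using M.rk_empty
  rk_mono := fun S T h => M.rk_mono (Finset.map_subset_map.mpr h)
  rk_submod := fun S T => by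
    try dsimp only
    rw [Finset.map_union, Finset.map_inter]
    exact M.rk_submod _ _
  rk_insert_le := fun S x => by
    try dsimp only
    rw [Finset.map_insert]
    exact M.rk_insert_le _ _

/-- The restriction `M^F` (the contraction of `M` by the flat `F`), a matroid on
the complement of `F`. -/
noncomputable def restrictionAt (M : FinMatroid) (F : Finset M.E) : FinMatroid where
  E := {x : M.E // x ∉ F}
  fintypeE := inferInstance
  deceqE := inferInstance
  rk S := M.rk (S.map (Function.Embedding.subtype _) ∪ F) - M.rk F
  rk_empty := by simp
  rk_mono := fun S T h =>
    Nat.sub_le_sub_right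
      (M.rk_mono (Finset.union_subset_union_left (Finset.map_subset_map.mpr h))) _
  rk_submod := fun S T => by
    try dsimp only
    set e := Function.Embedding.subtype (fun x : M.E => x ∉ F) with he
    have h1 : (S ∪ T).map e ∪ F = (S.map e ∪ F) ∪ (T.map e ∪ F) := by
      rw [Finset.map_union, Finset.union_union_distrib_right]
    have h2 : (S ∩ T).map e ∪ F = (S.map e ∪ F) ∩ (T.map e ∪ F) := by
      rw [Finset.map_inter, Finset.inter_union_distrib_right]
    have h3 := M.rk_submod (S.map e ∪ F) (T.map e ∪ F)
    have h4 : M.rk F ≤ M.rk (S.map e ∪ F) := M.rk_mono Finset.subset_union_right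
    have h5 : M.rk F ≤ M.rk (T.map e ∪ F) := M.rk_mono Finset.subset_union_right
    have h6 : M.rk F ≤ M.rk ((S ∩ T).map e ∪ F) := M.rk_mono Finset.subset_union_right
    have h7 : M.rk F ≤ M.rk ((S ∪ T).map e ∪ F) := M.rk_mono Finset.subset_union_right
    rw [h1] at h7 ⊢
    rw [h2] at h6 ⊢
    omega
  rk_insert_le := fun S x => by
    try dsimp only
    set e := Function.Embedding.subtype (fun x : M.E => x ∉ F) with he
    have h1 : (insert x S).map e ∪ F = insert (e x) (S.map e ∪ F) := by
      rw [Finset.map_insert, Finset.insert_union]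
    have h2 := M.rk_insert_le (S.map e ∪ F) (e x)
    have h3 : M.rk F ≤ M.rk (S.map e ∪ F) := M.rk_mono Finset.subset_union_right
    rw [h1]
    omega

end FinMatroid

namespace FinMatroid

/-- `P` is a Kazhdan–Lusztig family: it assigns to each loopless matroid a polynomial
satisfying the three defining conditions of the Kazhdan–Lusztig polynomial.
Condition (2), `deg P_M < rk M / 2`, is expressed by the vanishing of all coefficients
in degrees `i` with `2 i ≥ rk M`; condition (3), the Laurent-polynomial identity
`t^(rk M) P_M(t⁻¹) = ∑_F χ_{M_F}(t) P_{M^F}(t)`, is expressed via evaluation at every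
nonzero rational number. -/
def IsKLFamily (P : FinMatroid → Polynomial ℤ) : Prop :=
  (∀ M : FinMatroid, M.Loopless → M.rank = 0 → P M = 1) ∧
  (∀ M : FinMatroid, M.Loopless → 0 < M.rank →
      ∀ i : ℕ, M.rank ≤ 2 * i → (P M).coeff i = 0) ∧
  (∀ M : FinMatroid, M.Loopless → ∀ q : ℚ, q ≠ 0 →
      q ^ M.rank * Polynomial.aeval q⁻¹ (P M) =
        ∑ F ∈ M.flats,
          Polynomial.aeval q ((M.localization F).charPoly) *
            Polynomial.aeval q (P (M.restrictionAt F)))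

end FinMatroid

namespace FinMatroid

/-- Doubly indexed Whitney number of the second kind: the number of pairs of flats
`E ⊆ F` with `rk E = i` and `rk F = j` (indexed by integers, so that it vanishes for
negative indices). -/
noncomputable def W (M : FinMatroid) (i j : ℤ) : ℕ :=
  ((M.flats ×ˢ M.flats).filter
    (fun p => p.1 ⊆ p.2 ∧ (M.rk p.1 : ℤ) = i ∧ (M.rk p.2 : ℤ) = j)).card

/-- Doubly indexed Whitney number of the first kind: the sum of `μ(E,F)` over pairs of
flats with `rk E = i` and `rk F = j`. -/
noncomputable def w (M : FinMatroid) (i j : ℤ) : ℤ :=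
  ∑ p ∈ (M.flats ×ˢ M.flats).filter
      (fun p => (M.rk p.1 : ℤ) = i ∧ (M.rk p.2 : ℤ) = j),
    M.mu p.1 p.2

end FinMatroid

namespace FinMatroid

variable (M : FinMatroid)

lemma rk_le_rank (S : Finset M.E) : M.rk S ≤ M.rank :=
  M.rk_mono (Finset.subset_univ S)

lemma mem_flats {F : Finset M.E} : F ∈ M.flats ↔ M.IsFlat F := by
  simp [flats]

lemma univ_mem_flats : (Finset.univ : Finset M.E) ∈ M.flats :=
  M.mem_flats.mpr (fun x hx => absurd (Finset.mem_univ x) hx)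

lemma empty_mem_flats (h : M.Loopless) : (∅ : Finset M.E) ∈ M.flats := by
  refine M.mem_flats.mpr (fun x _ => ?_)
  have : insert x (∅ : Finset M.E) = {x} := rfl
  rw [this, h x, M.rk_empty]
  exact one_ne_zero

lemma rk_lt_of_flat_ssubset {G F : Finset M.E} (hG : M.IsFlat G) (hGF : G ⊂ F) :
    M.rk G < M.rk F := by
  obtain ⟨x, hxF, hxG⟩ := Finset.exists_of_ssubset hGF
  have h1 : M.rk (insert x G) ≤ M.rk G + 1 := M.rk_insert_le G x
  have h2 : M.rk G ≤ M.rk (insert x G) := M.rk_mono (Finset.subset_insert x G)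
  have h3 : M.rk (insert x G) ≠ M.rk G := hG x hxG
  have h4 : M.rk (insert x G) ≤ M.rk F :=
    M.rk_mono (Finset.insert_subset hxF hGF.subset)
  omega

lemma eq_univ_of_flat_rank {F : Finset M.E} (hF : M.IsFlat F) (h : M.rk F = M.rank) :
    F = Finset.univ := by
  by_contra hne
  have : F ⊂ Finset.univ := (Finset.subset_univ F).ssubset_of_ne hne
  have := M.rk_lt_of_flat_ssubset hF this
  rw [h] at this; exact lt_irrefl _ this

lemma eq_empty_of_rk_zero (h : M.Loopless) {F : Finset M.E} (hF : M.rk F = 0) :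
    F = ∅ := by
  by_contra hne
  obtain ⟨x, hx⟩ := Finset.nonempty_iff_ne_empty.mpr hne
  have : M.rk {x} ≤ M.rk F := M.rk_mono (Finset.singleton_subset_iff.mpr hx)
  rw [h x, hF] at this; omega

lemma mu_empty_empty : M.mu ∅ ∅ = 1 := by
  rw [mu]; simp

lemma mu_empty_rank_one (h : M.Loopless) {F : Finset M.E} (hF : F ∈ M.flats)
    (h1 : M.rk F = 1) : M.mu ∅ F = -1 := by
  have hFne : F ≠ ∅ := by
    intro he; rw [he, M.rk_empty] at h1; exact one_ne_zero h1.symm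
  have hfilter : M.flats.filter (fun G => ∅ ⊆ G ∧ G ⊂ F) = {∅} := by
    ext G
    simp only [Finset.mem_filter, Finset.mem_singleton]
    constructor
    · rintro ⟨hGf, -, hGF⟩
      have := M.rk_lt_of_flat_ssubset (M.mem_flats.mp hGf) hGF
      rw [h1] at this
      exact M.eq_empty_of_rk_zero h (by omega)
    · rintro rfl
      exact ⟨M.empty_mem_flats h, subset_rfl,
        (Finset.empty_subset F).ssubset_of_ne (Ne.symm hFne)⟩
  rw [mu, if_neg (Ne.symm hFne), hfilter]
  rw [Finset.sum_attach ({∅} : Finset (Finset M.E)) (fun G => M.mu ∅ G)]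
  simp [M.mu_empty_empty]

lemma charPoly_coeff (j : ℕ) :
    M.charPoly.coeff j =
      ∑ F ∈ M.flats.filter (fun F => M.rank - M.rk F = j), M.mu ∅ F := by
  rw [charPoly, Polynomial.finset_sum_coeff, Finset.sum_filter]
  refine Finset.sum_congr rfl (fun F _ => ?_)
  rw [Polynomial.coeff_C_mul, Polynomial.coeff_X_pow]
  split_ifs <;> simp_all

lemma charPoly_coeff_eq_zero {j : ℕ} (hj : M.rank < j) : M.charPoly.coeff j = 0 := by
  rw [charPoly_coeff]
  refine Finset.sum_eq_zero (fun F hF => absurd (Finset.mem_filter.mp hF).2 ?_)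
  have := M.rk_le_rank F
  omega

lemma rank_localization (F : Finset M.E) : (M.localization F).rank = M.rk F := by
  have : (Finset.univ : Finset {x : M.E // x ∈ F}).map
      (Function.Embedding.subtype _) = F := by
    ext a
    simp [Finset.mem_map]
  rw [rank, localization]
  dsimp only
  rw [this]

lemma localization_loopless (h : M.Loopless) (F : Finset M.E) :
    (M.localization F).Loopless := by
  intro x
  show M.rk (({x} : Finset {y : M.E // y ∈ F}).map (Function.Embedding.subtype _)) = 1
  erw [Finset.map_singleton]
  exact h x.1

lemma rank_restrictionAt (F : Finset M.E) :
    (M.restrictionAt F).rank = M.rank - M.rk F := by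
  have : (Finset.univ : Finset {x : M.E // x ∉ F}).map
      (Function.Embedding.subtype _) ∪ F = Finset.univ := by
    ext a
    simp only [Finset.mem_union, Finset.mem_map, Finset.mem_univ, iff_true]
    by_cases ha : a ∈ F
    · exact Or.inr ha
    · exact Or.inl ⟨⟨a, ha⟩, trivial, rfl⟩
  rw [rank, restrictionAt]
  dsimp only
  rw [this]
  rfl

lemma restrictionAt_loopless {F : Finset M.E} (hF : M.IsFlat F) :
    (M.restrictionAt F).Loopless := by
  intro x
  show M.rk (({x} : Finset {y : M.E // y ∉ F}).map (Function.Embedding.subtype _) ∪ F)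
      - M.rk F = 1
  erw [Finset.map_singleton]
  have h1 : ({x.1} : Finset M.E) ∪ F = insert x.1 F := by
    ext a; simp [Finset.mem_insert]
  simp only [Function.Embedding.coe_subtype]
  rw [h1]
  have h2 := M.rk_insert_le F x.1
  have h3 : M.rk F ≤ M.rk (insert x.1 F) := M.rk_mono (Finset.subset_insert _ _)
  have h4 := hF x.1 x.2
  omega

lemma charPoly_coeff_rank (h : M.Loopless) (hr : 1 ≤ M.rank) :
    M.charPoly.coeff M.rank = 1 := by
  rw [charPoly_coeff]
  have hfilter : M.flats.filter (fun F => M.rank - M.rk F = M.rank) = {∅} := by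
    ext F
    simp only [Finset.mem_filter, Finset.mem_singleton]
    constructor
    · rintro ⟨hFf, hFr⟩
      have := M.rk_le_rank F
      exact M.eq_empty_of_rk_zero h (by omega)
    · rintro rfl
      exact ⟨M.empty_mem_flats h, by rw [M.rk_empty]; omega⟩
  rw [hfilter, Finset.sum_singleton, M.mu_empty_empty]

lemma charPoly_coeff_rank_sub_one (h : M.Loopless) (hr : 1 ≤ M.rank) :
    M.charPoly.coeff (M.rank - 1) =
      -((M.flats.filter (fun F => M.rk F = 1)).card : ℤ) := by
  rw [charPoly_coeff]
  have hfilter : M.flats.filter (fun F => M.rank - M.rk F = M.rank - 1) =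
      M.flats.filter (fun F => M.rk F = 1) := by
    refine Finset.filter_congr (fun F hF => ?_)
    have := M.rk_le_rank F
    have h0 : M.rk F = 0 → F = ∅ := M.eq_empty_of_rk_zero h
    constructor
    · intro hc
      by_contra hne
      rcases Nat.eq_zero_or_pos (M.rk F) with h1 | h1
      · omega
      · omega
    · intro hc; omega
  rw [hfilter]
  rw [Finset.sum_congr rfl (fun F hF => M.mu_empty_rank_one h
    (Finset.mem_filter.mp hF).1 (Finset.mem_filter.mp hF).2)]
  simp [Finset.sum_const]

lemma flats_rank_zero (h : M.Loopless) (hr : M.rank = 0) :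
    M.flats = {∅} := by
  ext F
  simp only [Finset.mem_singleton]
  constructor
  · intro hF
    have := M.rk_le_rank F
    exact M.eq_empty_of_rk_zero h (by omega)
  · rintro rfl; exact M.empty_mem_flats h

lemma charPoly_rank_zero (h : M.Loopless) (hr : M.rank = 0) :
    M.charPoly = 1 := by
  rw [charPoly, M.flats_rank_zero h hr, Finset.sum_singleton, M.mu_empty_empty]
  rw [M.rk_empty, hr]
  simp

lemma flats_rank_one (h : M.Loopless) (hr : M.rank = 1) :
    M.flats = {∅, Finset.univ} := by
  ext F
  simp only [Finset.mem_insert, Finset.mem_singleton]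
  constructor
  · intro hF
    have h1 := M.rk_le_rank F
    rcases Nat.eq_zero_or_pos (M.rk F) with h2 | h2
    · exact Or.inl (M.eq_empty_of_rk_zero h h2)
    · exact Or.inr (M.eq_univ_of_flat_rank (M.mem_flats.mp hF) (by omega))
  · rintro (rfl | rfl)
    · exact M.empty_mem_flats h
    · exact M.univ_mem_flats

lemma empty_ne_univ_of_rank_pos (hr : 1 ≤ M.rank) :
    (∅ : Finset M.E) ≠ Finset.univ := by
  intro he
  have : M.rank = M.rk ∅ := by rw [rank, ← he]
  rw [M.rk_empty] at this; omega

lemma charPoly_rank_one (h : M.Loopless) (hr : M.rank = 1) :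
    M.charPoly = Polynomial.X - 1 := by
  rw [charPoly, M.flats_rank_one h hr,
    Finset.sum_pair (M.empty_ne_univ_of_rank_pos (by omega))]
  rw [M.mu_empty_empty, M.mu_empty_rank_one h M.univ_mem_flats (by rw [← rank]; exact hr)]
  rw [M.rk_empty, hr]
  have huniv : M.rk Finset.univ = 1 := hr
  rw [huniv]
  simp
  ring

lemma W_zero_eq (h : M.Loopless) (j : ℕ) :
    M.W 0 j = (M.flats.filter (fun F => M.rk F = j)).card := by
  rw [W]
  refine Finset.card_bij (fun p _ => p.2) ?_ ?_ ?_
  · rintro ⟨A, B⟩ hp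
    simp only [Finset.mem_filter, Finset.mem_product] at hp
    obtain ⟨⟨hA, hB⟩, hAB, hA0, hB1⟩ := hp
    exact Finset.mem_filter.mpr ⟨hB, by exact_mod_cast hB1⟩
  · rintro ⟨A, B⟩ hp ⟨A', B'⟩ hp' hBB
    simp only [Finset.mem_filter, Finset.mem_product] at hp hp'
    have hA : A = ∅ := M.eq_empty_of_rk_zero h (by exact_mod_cast hp.2.2.1)
    have hA' : A' = ∅ := M.eq_empty_of_rk_zero h (by exact_mod_cast hp'.2.2.1)
    simp only [Prod.mk.injEq]
    exact ⟨hA.trans hA'.symm, hBB⟩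
  · intro B hB
    simp only [Finset.mem_filter] at hB
    refine ⟨(∅, B), ?_, rfl⟩
    simp only [Finset.mem_filter, Finset.mem_product]
    exact ⟨⟨M.empty_mem_flats h, hB.1⟩, Finset.empty_subset B,
      by rw [M.rk_empty]; norm_num, by exact_mod_cast hB.2⟩

lemma localization_univ_flat_iff (S : Finset {x : M.E // x ∈ (Finset.univ : Finset M.E)}) :
    (M.localization Finset.univ).IsFlat S ↔
      M.IsFlat (S.map (Function.Embedding.subtype _)) := by
  have hins : ∀ x : {x : M.E // x ∈ (Finset.univ : Finset M.E)},
      (insert x S).map (Function.Embedding.subtype _) =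
        insert x.1 (S.map (Function.Embedding.subtype _)) := by
    intro x; simp [Finset.map_insert]
  constructor
  · intro hS y hy
    have hx : (⟨y, Finset.mem_univ y⟩ : {x : M.E // x ∈ (Finset.univ : Finset M.E)}) ∉ S :=
      fun hmem => hy (Finset.mem_map.mpr ⟨_, hmem, rfl⟩)
    have h2 : M.rk ((insert ⟨y, Finset.mem_univ y⟩ S).map (Function.Embedding.subtype _)) ≠
        M.rk (S.map (Function.Embedding.subtype _)) := hS _ hx
    rwa [hins] at h2
  · intro hS x hx
    have hy : x.1 ∉ S.map (Function.Embedding.subtype _) := by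
      intro hmem
      obtain ⟨z, hz, hze⟩ := Finset.mem_map.mp hmem
      exact hx (by rwa [Subtype.ext hze] at hz)
    have h2 := hS _ hy
    show M.rk ((insert x S).map (Function.Embedding.subtype _)) ≠
        M.rk (S.map (Function.Embedding.subtype _))
    erw [hins]; exact h2

lemma card_flats_localization_univ (j : ℕ) :
    ((M.localization Finset.univ).flats.filter
        (fun S => (M.localization Finset.univ).rk S = j)).card =
      (M.flats.filter (fun F => M.rk F = j)).card := by
  refine Finset.card_bij (fun S _ => S.map (Function.Embedding.subtype _)) ?_ ?_ ?_
  · intro S hS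
    simp only [Finset.mem_filter, mem_flats] at hS ⊢
    exact ⟨(M.localization_univ_flat_iff S).mp hS.1, hS.2⟩
  · intro S _ S' _ hmap
    exact Finset.map_injective _ hmap
  · intro T hT
    simp only [Finset.mem_filter, mem_flats] at hT
    have hmap : (T.subtype (fun x => x ∈ (Finset.univ : Finset M.E))).map
        (Function.Embedding.subtype _) = T := by
      rw [Finset.subtype_map, Finset.filter_true_of_mem (fun x _ => Finset.mem_univ x)]
    refine ⟨T.subtype _, ?_, hmap⟩
    refine Finset.mem_filter.mpr (And.imp (M.localization Finset.univ).mem_flats.mpr id ?_)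
    constructor
    · rw [M.localization_univ_flat_iff, hmap]; exact hT.1
    · show M.rk _ = j
      rw [hmap]; exact hT.2

lemma P_rank_zero (P : FinMatroid → Polynomial ℤ) (hP : IsKLFamily P)
    (N : FinMatroid) (h : N.Loopless) (hr : N.rank = 0) : P N = 1 :=
  hP.1 N h hr

lemma P_eq_C_of_rank_one (P : FinMatroid → Polynomial ℤ) (hP : IsKLFamily P)
    (N : FinMatroid) (h : N.Loopless) (hr : N.rank = 1) :
    P N = Polynomial.C ((P N).coeff 0) := by
  refine Polynomial.eq_C_of_natDegree_le_zero ?_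
  rw [Polynomial.natDegree_le_iff_coeff_eq_zero]
  intro m hm
  exact hP.2.1 N h (by omega) m (by omega)

lemma P_coeff_zero_rank_one (P : FinMatroid → Polynomial ℤ) (hP : IsKLFamily P)
    (N : FinMatroid) (h : N.Loopless) (hr : N.rank = 1) : (P N).coeff 0 = 1 := by
  set c := (P N).coeff 0 with hc
  have hPN : P N = Polynomial.C c := P_eq_C_of_rank_one P hP N h hr
  -- the ∅ and univ flats
  have hflats : N.flats = {∅, Finset.univ} := N.flats_rank_one h hr
  have hne : (∅ : Finset N.E) ≠ Finset.univ := N.empty_ne_univ_of_rank_pos (by omega)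
  -- localization at ∅ has charPoly 1
  have hloc0 : (N.localization ∅).charPoly = 1 := by
    refine charPoly_rank_zero _ (N.localization_loopless h ∅) ?_
    rw [N.rank_localization, N.rk_empty]
  -- localization at univ has charPoly X - 1
  have hloc1 : (N.localization Finset.univ).charPoly = Polynomial.X - 1 := by
    refine charPoly_rank_one _ (N.localization_loopless h Finset.univ) ?_
    rw [N.rank_localization]; exact hr
  -- restriction at univ: P = 1
  have hunivflat : N.IsFlat Finset.univ := N.mem_flats.mp N.univ_mem_flats
  have hres1 : P (N.restrictionAt Finset.univ) = 1 := by
    refine P_rank_zero P hP _ (N.restrictionAt_loopless hunivflat) ?_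
    rw [N.rank_restrictionAt, ← rank]; omega
  -- restriction at ∅: rank one
  have hresflat : N.IsFlat ∅ := N.mem_flats.mp (N.empty_mem_flats h)
  have hres0loop : (N.restrictionAt ∅).Loopless := N.restrictionAt_loopless hresflat
  have hres0rank : (N.restrictionAt ∅).rank = 1 := by
    rw [N.rank_restrictionAt, N.rk_empty]; omega
  set c' := (P (N.restrictionAt ∅)).coeff 0 with hc'
  have hres0 : P (N.restrictionAt ∅) = Polynomial.C c' :=
    P_eq_C_of_rank_one P hP _ hres0loop hres0rank
  have key : ∀ q : ℚ, q ≠ 0 → q * (c : ℚ) = (c' : ℚ) + (q - 1) := by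
    intro q hq
    have := hP.2.2 N h q hq
    rw [hflats, Finset.sum_pair hne, hloc0, hloc1, hres0, hres1, hPN, hr] at this
    simpa using this
  have k1 := key 1 one_ne_zero
  have k2 := key 2 two_ne_zero
  have : (c : ℚ) = 1 := by linarith
  exact_mod_cast this

end FinMatroid

/-- The linear coefficient of the Kazhdan–Lusztig polynomial of a
loopless matroid `M` of rank `d` is `W_{0,d-1} - W_{0,1}`: the number of flats of rank
`d - 1` minus the number of flats of rank `1`. -/
theorem kl_linear_coeff (P : FinMatroid → Polynomial ℤ) (hP : FinMatroid.IsKLFamily P)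
    (M : FinMatroid) (hM : M.Loopless) :
    (P M).coeff 1 = (M.W 0 ((M.rank : ℤ) - 1) : ℤ) - (M.W 0 1 : ℤ) := by
  classical
  open FinMatroid Polynomial in
  by_cases hd0 : M.rank = 0
  · -- rank 0 case
    have h1 : P M = 1 := hP.1 M hM hd0
    have hW1 : M.W 0 ((M.rank : ℤ) - 1) = 0 := by
      rw [W, Finset.card_eq_zero, Finset.filter_eq_empty_iff]
      rintro ⟨A, B⟩ hp
      rintro ⟨-, -, hB⟩
      rw [hd0] at hB
      omega
    have hW2 : M.W 0 1 = 0 := by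
      rw [W, Finset.card_eq_zero, Finset.filter_eq_empty_iff]
      rintro ⟨A, B⟩ hp
      rintro ⟨-, -, hB⟩
      dsimp only at hB
      have := M.rk_le_rank B
      rw [hd0] at this
      omega
    rw [h1, hW1, hW2]
    simp [Polynomial.coeff_one]
  by_cases hd1 : M.rank = 1
  · -- rank 1 case
    have h1 : (P M).coeff 1 = 0 := hP.2.1 M hM (by omega) 1 (by omega)
    have hW1 : M.W 0 ((M.rank : ℤ) - 1) = 1 := by
      have : ((M.rank : ℤ) - 1) = ((0 : ℕ) : ℤ) := by rw [hd1]; norm_num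
      rw [this, M.W_zero_eq hM 0]
      have : M.flats.filter (fun F => M.rk F = 0) = {∅} := by
        ext F
        simp only [Finset.mem_filter, Finset.mem_singleton]
        constructor
        · rintro ⟨-, hF⟩; exact M.eq_empty_of_rk_zero hM hF
        · rintro rfl; exact ⟨M.empty_mem_flats hM, M.rk_empty⟩
      rw [this, Finset.card_singleton]
    have hW2 : M.W 0 1 = 1 := by
      have : (1 : ℤ) = ((1 : ℕ) : ℤ) := by norm_num
      rw [this, M.W_zero_eq hM 1]
      have : M.flats.filter (fun F => M.rk F = 1) = {Finset.univ} := by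
        ext F
        simp only [Finset.mem_filter, Finset.mem_singleton]
        constructor
        · rintro ⟨hFf, hF⟩
          exact M.eq_univ_of_flat_rank (M.mem_flats.mp hFf) (by omega)
        · rintro rfl; exact ⟨M.univ_mem_flats, by rw [← rank]; exact hd1⟩
      rw [this, Finset.card_singleton]
    rw [h1, hW1, hW2]
    simp
  -- main case: d ≥ 2
  set d := M.rank with hd
  have hd2 : 2 ≤ d := by omega
  have hcoeff : ∀ i, d ≤ 2 * i → (P M).coeff i = 0 := hP.2.1 M hM (by omega)
  have hdeg : (P M).natDegree ≤ d := by
    rw [Polynomial.natDegree_le_iff_coeff_eq_zero]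
    intro m hm
    exact hcoeff m (by omega)
  set Q : Polynomial ℤ :=
    ∑ i ∈ Finset.range (d + 1), Polynomial.C ((P M).coeff i) * Polynomial.X ^ (d - i)
    with hQ
  set R : Polynomial ℤ :=
    ∑ F ∈ M.flats, (M.localization F).charPoly * P (M.restrictionAt F) with hR
  -- step 1: evaluation identity
  have heval : ∀ q : ℚ, q ≠ 0 → Polynomial.aeval q Q = Polynomial.aeval q R := by
    intro q hq
    have hmain := hP.2.2 M hM q hq
    have hQev : Polynomial.aeval q Q = q ^ d * Polynomial.aeval q⁻¹ (P M) := by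
      rw [hQ, map_sum]
      rw [Polynomial.aeval_eq_sum_range' (lt_of_le_of_lt hdeg (Nat.lt_succ_self d)),
        Finset.mul_sum]
      refine Finset.sum_congr rfl (fun i hi => ?_)
      have hi' : i ≤ d := by
        have := Finset.mem_range.mp hi; omega
      rw [map_mul, Polynomial.aeval_C, map_pow, Polynomial.aeval_X]
      rw [zsmul_eq_mul]
      have hpow : q ^ (d - i) = q ^ d * (q⁻¹) ^ i := by
        rw [inv_pow, pow_sub₀ q hq hi']
      rw [hpow]
      have hcast : (algebraMap ℤ ℚ) ((P M).coeff i) = (((P M).coeff i : ℤ) : ℚ) := rfl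
      rw [hcast]
      ring
    have hRev : Polynomial.aeval q R =
        ∑ F ∈ M.flats,
          Polynomial.aeval q ((M.localization F).charPoly) *
            Polynomial.aeval q (P (M.restrictionAt F)) := by
      rw [hR, map_sum]
      exact Finset.sum_congr rfl (fun F _ => map_mul _ _ _)
    rw [hQev, hRev]
    exact hmain
  -- step 2: polynomial identity
  have hQR : Q = R := by
    have hinj : Function.Injective (algebraMap ℤ ℚ) := fun a b hab => by
      exact_mod_cast hab
    have hmapzero : (Q - R).map (algebraMap ℤ ℚ) = 0 := by
      refine Polynomial.eq_zero_of_infinite_isRoot _ ?_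
      refine Set.Infinite.mono ?_
        (((Set.finite_singleton (0 : ℚ)).infinite_compl))
      intro q hq
      have hq' : q ≠ 0 := hq
      show Polynomial.IsRoot _ q
      rw [Polynomial.IsRoot, Polynomial.eval_map, ← Polynomial.aeval_def, map_sub,
        heval q hq', sub_self]
    have : Q - R = 0 := by
      have := Polynomial.map_injective (algebraMap ℤ ℚ) hinj
      apply this
      rw [hmapzero, Polynomial.map_zero]
    exact sub_eq_zero.mp this
  -- step 3: compare coefficients in degree d - 1
  have hQcoeff : Q.coeff (d - 1) = (P M).coeff 1 := by
    rw [hQ, Polynomial.finset_sum_coeff]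
    rw [Finset.sum_eq_single_of_mem 1 (Finset.mem_range.mpr (by omega))]
    · rw [Polynomial.coeff_C_mul, Polynomial.coeff_X_pow, if_pos rfl, mul_one]
    · intro i hi hne
      have hi' : i ≤ d := by have := Finset.mem_range.mp hi; omega
      rw [Polynomial.coeff_C_mul, Polynomial.coeff_X_pow, if_neg (by omega), mul_zero]
  have hterm : ∀ F ∈ M.flats,
      ((M.localization F).charPoly * P (M.restrictionAt F)).coeff (d - 1) =
        (if M.rk F = d then -((M.flats.filter (fun G => M.rk G = 1)).card : ℤ) else 0) +
        (if M.rk F = d - 1 then 1 else 0) := by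
    intro F hF
    have hk : M.rk F ≤ d := M.rk_le_rank F
    have hlocloop : (M.localization F).Loopless := M.localization_loopless hM F
    have hlocrank : (M.localization F).rank = M.rk F := M.rank_localization F
    have hresloop : (M.restrictionAt F).Loopless :=
      M.restrictionAt_loopless (M.mem_flats.mp hF)
    have hresrank : (M.restrictionAt F).rank = d - M.rk F := M.rank_restrictionAt F
    have hχzero : ∀ x, M.rk F < x → ((M.localization F).charPoly).coeff x = 0 := by
      intro x hx
      exact (M.localization F).charPoly_coeff_eq_zero (by rw [hlocrank]; exact hx)
    rcases eq_or_lt_of_le hk with hkd | hklt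
    · -- rk F = d : F is the whole ground set
      have hFuniv : F = Finset.univ := M.eq_univ_of_flat_rank (M.mem_flats.mp hF) hkd
      subst hFuniv
      have hres1 : P (M.restrictionAt Finset.univ) = 1 :=
        P_rank_zero P hP _ hresloop (by omega)
      rw [hres1, mul_one]
      have huniv_rank : (M.localization Finset.univ).rank = d := by
        rw [hlocrank]; exact hkd
      have hco := (M.localization Finset.univ).charPoly_coeff_rank_sub_one hlocloop
        (by rw [huniv_rank]; omega)
      rw [huniv_rank] at hco
      rw [hco, M.card_flats_localization_univ 1]
      rw [if_pos hkd, if_neg (by omega)]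
      ring
    · rw [Polynomial.coeff_mul]
      by_cases hk1 : M.rk F = d - 1
      · -- rk F = d - 1
        rw [Finset.sum_eq_single_of_mem (d - 1, 0)
          (Finset.HasAntidiagonal.mem_antidiagonal.mpr (by omega))]
        · have hχlead : ((M.localization F).charPoly).coeff (d - 1) = 1 := by
            have := (M.localization F).charPoly_coeff_rank hlocloop
              (by rw [hlocrank]; omega)
            rwa [hlocrank, hk1] at this
          have hP0 : (P (M.restrictionAt F)).coeff 0 = 1 :=
            P_coeff_zero_rank_one P hP _ hresloop (by rw [hresrank]; omega)
          rw [hχlead, hP0, if_neg (by omega), if_pos hk1]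
          ring
        · rintro ⟨x, y⟩ hb hne
          have hxy : x + y = d - 1 := Finset.HasAntidiagonal.mem_antidiagonal.mp hb
          have hy : 1 ≤ y := by
            by_contra hy0
            have : y = 0 := by omega
            exact hne (by rw [this] at hxy ⊢; rw [show x = d - 1 by omega])
          have : (P (M.restrictionAt F)).coeff y = 0 :=
            hP.2.1 _ hresloop (by rw [hresrank]; omega) y (by rw [hresrank]; omega)
          rw [this, mul_zero]
      · -- rk F ≤ d - 2
        rw [if_neg (by omega), if_neg hk1, add_zero]
        refine Finset.sum_eq_zero ?_
        rintro ⟨x, y⟩ hb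
        have hxy : x + y = d - 1 := Finset.HasAntidiagonal.mem_antidiagonal.mp hb
        by_cases hy : d - M.rk F ≤ 2 * y
        · have : (P (M.restrictionAt F)).coeff y = 0 :=
            hP.2.1 _ hresloop (by rw [hresrank]; omega) y (by rw [hresrank]; omega)
          rw [this, mul_zero]
        · have hx : M.rk F < x := by omega
          rw [hχzero x hx, zero_mul]
  have hfilterd : M.flats.filter (fun F => M.rk F = d) = {Finset.univ} := by
    ext F
    simp only [Finset.mem_filter, Finset.mem_singleton]
    constructor
    · rintro ⟨hFf, hFr⟩
      exact M.eq_univ_of_flat_rank (M.mem_flats.mp hFf) hFr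
    · rintro rfl
      exact ⟨M.univ_mem_flats, rfl⟩
  have hRcoeff : R.coeff (d - 1) =
      -((M.flats.filter (fun G => M.rk G = 1)).card : ℤ) +
        ((M.flats.filter (fun G => M.rk G = d - 1)).card : ℤ) := by
    rw [hR, Polynomial.finset_sum_coeff, Finset.sum_congr rfl hterm,
      Finset.sum_add_distrib]
    congr 1
    · rw [← Finset.sum_filter, hfilterd, Finset.sum_singleton]
    · rw [← Finset.sum_filter, Finset.sum_const, nsmul_eq_mul, mul_one]
  have hW1 : (M.W 0 ((M.rank : ℤ) - 1) : ℤ) =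
      ((M.flats.filter (fun G => M.rk G = d - 1)).card : ℤ) := by
    have hcast : ((M.rank : ℤ) - 1) = (((d - 1 : ℕ) : ℕ) : ℤ) := by
      rw [← hd]; omega
    rw [hcast, M.W_zero_eq hM (d - 1)]
  have hW2 : (M.W 0 1 : ℤ) = ((M.flats.filter (fun G => M.rk G = 1)).card : ℤ) := by
    have hcast : (1 : ℤ) = (((1 : ℕ) : ℕ) : ℤ) := by norm_num
    rw [hcast, M.W_zero_eq hM 1]
  rw [hW1, hW2, ← hQcoeff, hQR, hRcoeff]
  ring
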